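/- Let λ ∈ ℝ, λ ≠ 0, and define G : ℝ² → ℝ by G(p₀,p₁) = (λ⁻¹sinh(λp₀) + (λ/2)p₁²e^{−λp₀})² + (e^{−λp₀}p₁)² (that is, G = r² in the deformed polar coordinates). Then G is annihilated by the boost vector field: for all (p₀,p₁) ∈ ℝ², p₁·∂G/∂p₀(p₀,p₁) + ((1−e^{2λp₀})/(2λ) + (λ/2)p₁²)·∂G/∂p₁(p₀,p₁) = 0. Hence r² is a central (invariant) quantity for the action of the boost generator of the quantum Euclidean group. -/

import Mathlib

/-- The function `G = r²` in the deformed polar coordinates of the quantum Euclidean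
group: `G(p₀,p₁) = (λ⁻¹sinh(λp₀) + (λ/2)p₁²e^{−λp₀})² + (e^{−λp₀}p₁)²`. -/
noncomputable def Gsym (l : ℝ) (p : ℝ × ℝ) : ℝ :=
  (l⁻¹ * Real.sinh (l * p.1) + l / 2 * p.2 ^ 2 * Real.exp (-(l * p.1))) ^ 2 +
    (Real.exp (-(l * p.1)) * p.2) ^ 2

/-!
The boost field `V` acts on the deformed polar coordinates `X = r cos θ`, `Y = r sin θ` as the
infinitesimal rotation `V X = Y`, `V Y = -X`; hence `V (X² + Y²) = 2XY - 2YX = 0`.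
-/

open Real

/-- The boost generator `χ(N)`, divided by `i`. -/
noncomputable def boostField (l : ℝ) (p : ℝ × ℝ) : ℝ × ℝ :=
  (p.2, (1 - exp (2 * l * p.1)) / (2 * l) + l / 2 * p.2 ^ 2)

/-- `r cos θ` -/
noncomputable def polarX (l : ℝ) (p : ℝ × ℝ) : ℝ :=
  l⁻¹ * sinh (l * p.1) + l / 2 * p.2 ^ 2 * exp (-(l * p.1))

/-- `r sin θ` -/
noncomputable def polarY (l : ℝ) (p : ℝ × ℝ) : ℝ :=
  exp (-(l * p.1)) * p.2

theorem Gsym_eq_polarX_sq_add_polarY_sq (l : ℝ) :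
    Gsym l = fun p => polarX l p ^ 2 + polarY l p ^ 2 :=
  rfl

theorem ContinuousLinearMap.apply_prod_eq_mul_add_mul (L : ℝ × ℝ →L[ℝ] ℝ) (a b : ℝ) :
    L (a, b) = a * L (1, 0) + b * L (0, 1) := by
  have hab : ((a, b) : ℝ × ℝ) = a • ((1, 0) : ℝ × ℝ) + b • ((0, 1) : ℝ × ℝ) := by simp
  rw [hab, map_add, map_smul, map_smul, smul_eq_mul, smul_eq_mul]

theorem fderiv_prod_apply_eq_of_hasDerivAt {f : ℝ × ℝ → ℝ} {x y d₀ d₁ : ℝ}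
    (hf : DifferentiableAt ℝ f (x, y)) (h₀ : HasDerivAt (fun t => f (t, y)) d₀ x)
    (h₁ : HasDerivAt (fun s => f (x, s)) d₁ y) (a b : ℝ) :
    fderiv ℝ f (x, y) (a, b) = a * d₀ + b * d₁ := by
  have e₀ : fderiv ℝ f (x, y) (1, 0) = d₀ := by
    refine HasDerivAt.unique ?_ h₀
    simpa [Function.comp_def] using
      hf.hasFDerivAt.comp_hasDerivAt x ((hasDerivAt_id x).prodMk (hasDerivAt_const x y))
  have e₁ : fderiv ℝ f (x, y) (0, 1) = d₁ := by
    refine HasDerivAt.unique ?_ h₁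
    simpa [Function.comp_def] using
      hf.hasFDerivAt.comp_hasDerivAt y ((hasDerivAt_const y x).prodMk (hasDerivAt_id y))
  rw [ContinuousLinearMap.apply_prod_eq_mul_add_mul, e₀, e₁]

theorem fderiv_sq_add_sq_eq_zero_of_rotation {E : Type*} [NormedAddCommGroup E]
    [NormedSpace ℝ E] {f g : E → ℝ} {x v : E} (hf : DifferentiableAt ℝ f x)
    (hg : DifferentiableAt ℝ g x) (hfv : fderiv ℝ f x v = g x) (hgv : fderiv ℝ g x v = -f x) :
    fderiv ℝ (fun y => f y ^ 2 + g y ^ 2) x v = 0 := by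
  have h := ((hf.hasFDerivAt.pow 2).add (hg.hasFDerivAt.pow 2)).fderiv
  simp only [Pi.add_def] at h
  rw [h]
  simp only [add_apply, smul_apply, hfv, hgv, smul_eq_mul, nsmul_eq_mul, Nat.cast_ofNat,
    Nat.add_one_sub_one, pow_one]
  ring

section

variable {l : ℝ}

theorem hasDerivAt_polarX_fst (hl : l ≠ 0) (x y : ℝ) :
    HasDerivAt (fun t => polarX l (t, y))
      (cosh (l * x) - l ^ 2 / 2 * y ^ 2 * exp (-(l * x))) x := by
  have hlin : HasDerivAt (fun t => l * t) l x := by simpa using (hasDerivAt_id x).const_mul l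
  have hneg : HasDerivAt (fun t => -(l * t)) (-l) x := hlin.neg
  refine ((hlin.sinh.const_mul l⁻¹).add (hneg.exp.const_mul (l / 2 * y ^ 2))).congr_deriv ?_
  field_simp
  ring

theorem hasDerivAt_polarX_snd (l x y : ℝ) :
    HasDerivAt (fun s => polarX l (x, s)) (l * y * exp (-(l * x))) y := by
  refine ((((hasDerivAt_pow 2 y).const_mul (l / 2)).mul_const (exp (-(l * x)))).const_add
    (l⁻¹ * sinh (l * x))).congr_deriv ?_
  ring

theorem hasDerivAt_polarY_fst (l x y : ℝ) :
    HasDerivAt (fun t => polarY l (t, y)) (-l * exp (-(l * x)) * y) x := by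
  have hneg : HasDerivAt (fun t => -(l * t)) (-l) x := by
    simpa using (hasDerivAt_id x).const_mul (-l)
  exact (hneg.exp.mul_const y).congr_deriv (by ring)

theorem hasDerivAt_polarY_snd (l x y : ℝ) :
    HasDerivAt (fun s => polarY l (x, s)) (exp (-(l * x))) y :=
  ((hasDerivAt_id y).const_mul (exp (-(l * x)))).congr_deriv (mul_one _)

theorem differentiableAt_polarX (l : ℝ) (p : ℝ × ℝ) : DifferentiableAt ℝ (polarX l) p := by
  unfold polarX
  fun_prop

theorem differentiableAt_polarY (l : ℝ) (p : ℝ × ℝ) : DifferentiableAt ℝ (polarY l) p := by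
  unfold polarY
  fun_prop

theorem exp_two_mul_eq_sq (x : ℝ) : exp (2 * x) = exp x ^ 2 := by
  rw [sq, ← exp_add, two_mul]

theorem fderiv_polarX_boostField (hl : l ≠ 0) (p : ℝ × ℝ) :
    fderiv ℝ (polarX l) p (boostField l p) = polarY l p := by
  obtain ⟨x, y⟩ := p
  rw [boostField, fderiv_prod_apply_eq_of_hasDerivAt (differentiableAt_polarX l _)
    (hasDerivAt_polarX_fst hl x y) (hasDerivAt_polarX_snd l x y), polarY]
  rw [cosh_eq, mul_assoc 2 l x, exp_two_mul_eq_sq, exp_neg]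
  field_simp
  ring

theorem fderiv_polarY_boostField (hl : l ≠ 0) (p : ℝ × ℝ) :
    fderiv ℝ (polarY l) p (boostField l p) = -polarX l p := by
  obtain ⟨x, y⟩ := p
  rw [boostField, fderiv_prod_apply_eq_of_hasDerivAt (differentiableAt_polarY l _)
    (hasDerivAt_polarY_fst l x y) (hasDerivAt_polarY_snd l x y), polarX]
  rw [sinh_eq, mul_assoc 2 l x, exp_two_mul_eq_sq, exp_neg]
  field_simp
  ring

end

/-- `G = r²` is annihilated by the boost vector field of the quantum Euclidean group:
`p₁∂₀G + ((1−e^{2λp₀})/(2λ) + (λ/2)p₁²)∂₁G = 0`, so `r²` is a central (invariant)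
quantity for the boost action. -/
theorem boost_invariant_rsq (l : ℝ) (hl : l ≠ 0) (p : ℝ × ℝ) :
    p.2 * fderiv ℝ (Gsym l) p (1, 0) +
      ((1 - Real.exp (2 * l * p.1)) / (2 * l) + l / 2 * p.2 ^ 2) *
        fderiv ℝ (Gsym l) p (0, 1) = 0 := by
  have h := fderiv_sq_add_sq_eq_zero_of_rotation (differentiableAt_polarX l p)
    (differentiableAt_polarY l p) (fderiv_polarX_boostField hl p) (fderiv_polarY_boostField hl p)
  rwa [← Gsym_eq_polarX_sq_add_polarY_sq, boostField,
    ContinuousLinearMap.apply_prod_eq_mul_add_mul] at h
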